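/- arXiv:1311.1834 — 3 statements merged into one kernel-verified Lean document; each statement's English description precedes it below -/
import Mathlib

section
/- There exists a universal constant M > 0 such that for every twice continuously differentiable function f : [0,1] → ℂ one has (max_{t∈[0,1]} |f′(t)|)² ≤ M · (max_{t∈[0,1]} |f(t)|) · (max_{t∈[0,1]} |f(t)| + max_{t∈[0,1]} |f″(t)|). -/
lemma landau_key (f : ℝ → ℂ) (hf : ContDiffOn ℝ 2 f (Set.Icc 0 1)) {A B : ℝ}
    (hA : ∀ x ∈ Set.Icc (0:ℝ) 1, ‖f x‖ ≤ A)
    (hB : ∀ x ∈ Set.Icc (0:ℝ) 1,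
      ‖derivWithin (derivWithin f (Set.Icc 0 1)) (Set.Icc 0 1) x‖ ≤ B)
    {t h : ℝ} (ht : t ∈ Set.Icc (0:ℝ) 1) (hh0 : 0 < h) (hh : h ≤ 1/2) :
    ‖derivWithin f (Set.Icc 0 1) t‖ ≤ 2*A/h + B*h := by
  set s : Set ℝ := Set.Icc 0 1 with hs
  have hB0 : 0 ≤ B := le_trans (norm_nonneg _) (hB 0 ⟨le_refl 0, zero_le_one⟩)
  have hud : UniqueDiffOn ℝ s := uniqueDiffOn_Icc zero_lt_one
  set f' : ℝ → ℂ := derivWithin f s with hf'def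
  set f'' : ℝ → ℂ := derivWithin f' s with hf''def
  have hf1 : ContDiffOn ℝ 1 f' s := hf.derivWithin hud (by norm_num)
  have hfd : ∀ x ∈ s, HasDerivWithinAt f (f' x) s x := fun x hx =>
    ((hf.differentiableOn (by norm_num)) x hx).hasDerivWithinAt
  have hfd' : ∀ x ∈ s, HasDerivWithinAt f' (f'' x) s x := fun x hx =>
    ((hf1.differentiableOn (by norm_num)) x hx).hasDerivWithinAt
  -- MVT for f' : ‖f' x - f' t‖ ≤ B * |x - t|
  have mvt1 : ∀ x ∈ s, ‖f' x - f' t‖ ≤ B * |x - t| := by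
    intro x hx
    have := Convex.norm_image_sub_le_of_norm_hasDerivWithin_le hfd' hB (convex_Icc 0 1) ht hx
    simpa [Real.norm_eq_abs] using this
  -- pick the endpoint u
  obtain ⟨u, hu, hut⟩ : ∃ u ∈ s, |u - t| = h := by
    obtain ht' | ht' := le_or_gt t (1/2)
    · refine ⟨t + h, ⟨by linarith [ht.1], by linarith⟩, by simp [abs_of_pos hh0]⟩
    · refine ⟨t - h, ⟨by linarith, by linarith [ht.2]⟩, ?_⟩
      rw [show t - h - t = -h by ring, abs_neg, abs_of_pos hh0]
  set c : ℂ := f' t with hc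
  set J : Set ℝ := Set.Icc (min t u) (max t u) with hJ
  have hJs : J ⊆ s := Set.Icc_subset_Icc (le_min ht.1 hu.1) (max_le ht.2 hu.2)
  have htJ : t ∈ J := ⟨min_le_left _ _, le_max_left _ _⟩
  have huJ : u ∈ J := ⟨min_le_right _ _, le_max_right _ _⟩
  set g : ℝ → ℂ := fun x => f x - f t - (x - t) • c with hg
  have hgd : ∀ x ∈ J, HasDerivWithinAt g (f' x - c) J x := by
    intro x hx
    have h1 : HasDerivWithinAt (fun y : ℝ => (y - t) • c) ((1:ℝ) • c) J x :=
      ((hasDerivWithinAt_id x J).sub_const t).smul_const c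
    have h2 := (((hfd x (hJs hx)).mono hJs).sub_const (f t)).sub h1
    rw [one_smul] at h2
    exact h2
  have hgbound : ∀ x ∈ J, ‖f' x - c‖ ≤ B * h := by
    intro x hx
    refine le_trans (mvt1 x (hJs hx)) (mul_le_mul_of_nonneg_left ?_ hB0)
    rw [← hut]
    have h1 : min t u ≤ x := hx.1
    have h2 : x ≤ max t u := hx.2
    rcases le_total t u with htu | htu
    · rw [min_eq_left htu] at h1; rw [max_eq_right htu] at h2
      rw [abs_of_nonneg (by linarith), abs_of_nonneg (by linarith)]; linarith
    · rw [min_eq_right htu] at h1; rw [max_eq_left htu] at h2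
      rw [abs_of_nonpos (by linarith), abs_of_nonpos (by linarith)]; linarith
  have hmvt2 : ‖g u - g t‖ ≤ (B * h) * ‖u - t‖ :=
    Convex.norm_image_sub_le_of_norm_hasDerivWithin_le hgd hgbound (convex_Icc _ _) htJ huJ
  have hgt : g t = 0 := by simp [hg]
  have hnorm : ‖u - t‖ = h := by rw [Real.norm_eq_abs, hut]
  have hgu : ‖g u‖ ≤ (B * h) * h := by
    have := hmvt2; rw [hgt, sub_zero, hnorm] at this; exact this
  have key : h * ‖c‖ ≤ 2 * A + B * h * h := by
    have h1 : ‖(u - t) • c‖ = h * ‖c‖ := by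
      rw [norm_smul, Real.norm_eq_abs, hut]
    have h2 : (u - t) • c = (f u - f t) - g u := by simp [hg]
    calc h * ‖c‖ = ‖(f u - f t) - g u‖ := by rw [← h2, h1]
      _ ≤ ‖f u - f t‖ + ‖g u‖ := norm_sub_le _ _
      _ ≤ (‖f u‖ + ‖f t‖) + (B * h) * h := add_le_add (norm_sub_le _ _) hgu
      _ ≤ 2 * A + B * h * h := by
          have := hA u hu; have := hA t ht; nlinarith
  rw [div_add' _ _ _ (ne_of_gt hh0), le_div_iff₀ hh0]
  nlinarith

/-- There is a universal M > 0 such that for every f ∈ C²([0,1], ℂ),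
(max |f′|)² ≤ M · (max |f|) · (max |f| + max |f″|), maxima over [0,1]. -/
theorem landau_type_inequality : ∃ M : ℝ, 0 < M ∧ ∀ f : ℝ → ℂ,
    ContDiffOn ℝ 2 f (Set.Icc 0 1) →
    (⨆ t : Set.Icc (0:ℝ) 1, ‖derivWithin f (Set.Icc 0 1) (t : ℝ)‖) ^ 2 ≤
      M * (⨆ t : Set.Icc (0:ℝ) 1, ‖f (t : ℝ)‖) *
        ((⨆ t : Set.Icc (0:ℝ) 1, ‖f (t : ℝ)‖) +
          (⨆ t : Set.Icc (0:ℝ) 1,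
            ‖derivWithin (derivWithin f (Set.Icc 0 1)) (Set.Icc 0 1) (t : ℝ)‖)) := by
  refine ⟨144, by norm_num, fun f hf => ?_⟩
  haveI : Nonempty (Set.Icc (0:ℝ) 1) := ⟨⟨0, le_refl 0, zero_le_one⟩⟩
  set s : Set ℝ := Set.Icc 0 1 with hs
  have hud : UniqueDiffOn ℝ s := uniqueDiffOn_Icc zero_lt_one
  set f' : ℝ → ℂ := derivWithin f s with hf'def
  set f'' : ℝ → ℂ := derivWithin f' s with hf''def
  set A : ℝ := ⨆ t : Set.Icc (0:ℝ) 1, ‖f (t : ℝ)‖ with hAdef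
  set S : ℝ := ⨆ t : Set.Icc (0:ℝ) 1, ‖f' (t : ℝ)‖ with hSdef
  set B : ℝ := ⨆ t : Set.Icc (0:ℝ) 1, ‖f'' (t : ℝ)‖ with hBdef
  -- continuity facts and boundedness of ranges
  have hf1 : ContDiffOn ℝ 1 f' s := hf.derivWithin hud (by norm_num)
  have hcf : ContinuousOn f s := hf.continuousOn
  have hcf' : ContinuousOn f' s := hf1.continuousOn
  have hcf'' : ContinuousOn f'' s := (hf1.derivWithin (m := 0) hud (by norm_num)).continuousOn
  have bdd : ∀ g : ℝ → ℂ, ContinuousOn g s →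
      BddAbove (Set.range fun t : Set.Icc (0:ℝ) 1 => ‖g (t : ℝ)‖) := by
    intro g hg
    have hcont : Continuous fun t : Set.Icc (0:ℝ) 1 => ‖g (t : ℝ)‖ :=
      (hg.restrict).norm
    exact (isCompact_range hcont).bddAbove
  have hA : ∀ x ∈ s, ‖f x‖ ≤ A := fun x hx =>
    le_ciSup (bdd f hcf) (⟨x, hx⟩ : Set.Icc (0:ℝ) 1)
  have hB : ∀ x ∈ s, ‖f'' x‖ ≤ B := fun x hx =>
    le_ciSup (bdd f'' hcf'') (⟨x, hx⟩ : Set.Icc (0:ℝ) 1)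
  have hS : ∀ x ∈ s, ‖f' x‖ ≤ S := fun x hx =>
    le_ciSup (bdd f' hcf') (⟨x, hx⟩ : Set.Icc (0:ℝ) 1)
  have hA0 : 0 ≤ A := le_trans (norm_nonneg _) (hA 0 ⟨le_refl 0, zero_le_one⟩)
  have hB0 : 0 ≤ B := le_trans (norm_nonneg _) (hB 0 ⟨le_refl 0, zero_le_one⟩)
  have hS0 : 0 ≤ S := le_trans (norm_nonneg _) (hS 0 ⟨le_refl 0, zero_le_one⟩)
  -- the key bound
  have key : ∀ h : ℝ, 0 < h → h ≤ 1/2 → S ≤ 2*A/h + B*h := by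
    intro h hh0 hh
    refine ciSup_le fun t => ?_
    exact landau_key f hf hA hB t.2 hh0 hh
  rcases le_or_gt B (16 * A) with hBA | hBA
  · -- use h = 1/2 : S ≤ 4A + B/2 ≤ 12A
    have h1 : S ≤ 12 * A := by
      have := key (1/2) (by norm_num) (le_refl _)
      rw [show 2*A/(1/2 : ℝ) = 4*A by ring] at this
      linarith
    nlinarith
  · -- B > 16A
    rcases eq_or_lt_of_le hA0 with hA0' | hA0'
    · -- A = 0 : S = 0
      have hBpos : 0 < B := by linarith
      have hS0' : S ≤ 0 := by
        by_contra hcon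
        push_neg at hcon
        have hhp : 0 < min (1/2 : ℝ) (S / (2*B)) :=
          lt_min (by norm_num) (div_pos hcon (by linarith))
        have := key _ hhp (min_le_left _ _)
        rw [← hA0'] at this
        have h2 : (2:ℝ) * 0 / min (1/2 : ℝ) (S / (2*B)) = 0 := by
          rw [mul_zero, zero_div]
        rw [h2, zero_add] at this
        have h3 : B * min (1/2 : ℝ) (S / (2*B)) ≤ B * (S / (2*B)) :=
          mul_le_mul_of_nonneg_left (min_le_right _ _) hB0
        have h4 : B * (S / (2*B)) = S / 2 := by
          field_simp
        linarith
      have hS' : S = 0 := le_antisymm hS0' hS0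
      rw [hS', ← hA0']
      norm_num
    · -- A > 0, B > 16A > 0 : use h = √(2A/B)
      have hBpos : 0 < B := by linarith
      set h : ℝ := Real.sqrt (2*A/B) with hhdef
      have hq : 0 < 2*A/B := div_pos (by linarith) hBpos
      have hh0 : 0 < h := Real.sqrt_pos.2 hq
      have hsq : h^2 = 2*A/B := Real.sq_sqrt (le_of_lt hq)
      have hhalf : h ≤ 1/2 := by
        have h18 : 2*A/B ≤ 1/8 := by
          rw [div_le_div_iff₀ hBpos (by norm_num)]
          linarith
        calc h ≤ Real.sqrt (1/8) := Real.sqrt_le_sqrt h18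
          _ ≤ 1/2 := by
              rw [show (1/2 : ℝ) = Real.sqrt ((1/2)^2) by rw [Real.sqrt_sq (by norm_num)]]
              exact Real.sqrt_le_sqrt (by norm_num)
      have hkey := key h hh0 hhalf
      -- 2A/h = B*h since h² = 2A/B
      have heq : 2*A/h = B*h := by
        rw [div_eq_iff (ne_of_gt hh0)]
        have : B * h * h = B * h^2 := by ring
        rw [this, hsq]
        field_simp
      rw [heq] at hkey
      have hS2 : S^2 ≤ (2*(B*h))^2 := by
        have : S ≤ 2*(B*h) := by linarith
        nlinarith [mul_pos hBpos hh0]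
      have hBh2 : (2*(B*h))^2 = 4 * B^2 * h^2 := by ring
      have hval : 4 * B^2 * h^2 = 8 * A * B := by
        rw [hsq]; field_simp; ring
      nlinarith
end

section
/- For every θ ∈ (0,1) there exists c > 0 such that for every f : ℝⁿ → ℝ of class C^{1,θ} (bounded, with bounded derivative, whose derivative has finite θ-Hölder seminorm) one has ‖f‖_{C¹} ≤ c · ‖f‖_{C⁰}^{θ/(1+θ)} · ‖f‖_{C^{1,θ}}^{1/(1+θ)}, where ‖f‖_{C^{1,θ}} := ‖f‖_{C¹} + max_{|α|=1} [∂^α f]_θ. -/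
/-!
Taylor's formula with a θ-Hölder remainder gives, at every scale `t > 0`,
`‖Df x‖ ≤ 2 ‖f‖_∞ / t + L t^θ`, where `L` is the Hölder constant of `Df` in operator norm; on
`ℝⁿ` one may take `L = √n · max_i [∂_i f]_θ`. With `K = ‖f‖_{C^{1,θ}}` and
`t = (‖f‖_∞ / K)^{1/(1+θ)}` both terms become `‖f‖_∞^{θ/(1+θ)} K^{1/(1+θ)}`, which also dominates
`‖f‖_∞` because `‖f‖_∞ ≤ K`.
-/

/-- Sup norm `‖f‖_∞ = ⨆ x, ‖f x‖`. -/
noncomputable def supNorm {E F : Type*} [NormedAddCommGroup F] (f : E → F) : ℝ :=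
  ⨆ x, ‖f x‖

/-- The θ-Hölder seminorm `[f]_θ = sup_{x ≠ y} ‖f x − f y‖ / |x−y|^θ`. -/
noncomputable def holderSemi {E F : Type*} [NormedAddCommGroup E] [NormedAddCommGroup F]
    (θ : ℝ) (f : E → F) : ℝ :=
  ⨆ p : {p : E × E // p.1 ≠ p.2}, ‖f p.1.1 - f p.1.2‖ / ‖p.1.1 - p.1.2‖ ^ θ

open Metric

section SupNorm

variable {E F : Type*} [NormedAddCommGroup F] {f : E → F}

lemma supNorm_nonneg (f : E → F) : 0 ≤ supNorm f :=
  Real.iSup_nonneg fun _ => norm_nonneg _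

lemma norm_le_supNorm (hf : BddAbove (Set.range fun x => ‖f x‖)) (x : E) : ‖f x‖ ≤ supNorm f :=
  le_ciSup hf x

lemma supNorm_le [Nonempty E] {C : ℝ} (h : ∀ x, ‖f x‖ ≤ C) : supNorm f ≤ C :=
  ciSup_le h

end SupNorm

section HolderSemi

variable {E F : Type*} [NormedAddCommGroup E] [NormedAddCommGroup F]

lemma holderSemi_nonneg (θ : ℝ) (g : E → F) : 0 ≤ holderSemi θ g :=
  Real.iSup_nonneg fun _ => by positivity

lemma norm_sub_le_holderSemi_mul {θ M : ℝ} {g : E → F}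
    (hg : ∀ x y, ‖g x - g y‖ ≤ M * ‖x - y‖ ^ θ) (x y : E) :
    ‖g x - g y‖ ≤ holderSemi θ g * ‖x - y‖ ^ θ := by
  rcases eq_or_ne x y with rfl | hxy
  · rw [sub_self, norm_zero]
    exact mul_nonneg (holderSemi_nonneg θ g) (by positivity)
  have hbdd : BddAbove (Set.range fun p : {p : E × E // p.1 ≠ p.2} =>
      ‖g p.1.1 - g p.1.2‖ / ‖p.1.1 - p.1.2‖ ^ θ) := by
    refine ⟨M, ?_⟩
    rintro _ ⟨⟨⟨u, w⟩, huw⟩, rfl⟩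
    exact (div_le_iff₀ (Real.rpow_pos_of_pos (norm_sub_pos_iff.mpr huw) θ)).mpr (hg u w)
  exact (div_le_iff₀ (Real.rpow_pos_of_pos (norm_sub_pos_iff.mpr hxy) θ)).mp
    (le_ciSup hbdd ⟨(x, y), hxy⟩)

end HolderSemi

section Euclidean

variable {ι : Type*} [Fintype ι] [DecidableEq ι]

lemma opNorm_le_sqrt_card_mul_iSup_norm_apply_single (φ : EuclideanSpace ℝ ι →L[ℝ] ℝ) :
    ‖φ‖ ≤ √(Fintype.card ι) * ⨆ i, ‖φ (EuclideanSpace.single i 1)‖ := by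
  set v := (InnerProductSpace.toDual ℝ (EuclideanSpace ℝ ι)).symm φ
  have hv : ‖φ‖ = ‖v‖ := by simp [v]
  rw [hv]
  convert (EuclideanSpace.basisFun ι ℝ).norm_le_card_mul_iSup_norm_inner v using 4 with i
  simp [v, ← InnerProductSpace.toDual_symm_apply, real_inner_comm]

lemma norm_sub_le_sqrt_card_mul_iSup_holderSemi_mul {X : Type*} [NormedAddCommGroup X]
    {θ M : ℝ} {g : X → EuclideanSpace ℝ ι →L[ℝ] ℝ}
    (hg : ∀ x y, ‖g x - g y‖ ≤ M * ‖x - y‖ ^ θ) (x y : X) :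
    ‖g x - g y‖ ≤ √(Fintype.card ι) *
      (⨆ i, holderSemi θ fun x => g x (EuclideanSpace.single i 1)) * ‖x - y‖ ^ θ := by
  set H := ⨆ i, holderSemi θ fun x => g x (EuclideanSpace.single i 1)
  have hH : 0 ≤ H := Real.iSup_nonneg fun i => holderSemi_nonneg θ _
  have hpartial : ∀ i, ‖(g x - g y) (EuclideanSpace.single i 1)‖ ≤ H * ‖x - y‖ ^ θ := by
    intro i
    have hgi : ∀ x y, ‖g x (EuclideanSpace.single i 1) - g y (EuclideanSpace.single i 1)‖
        ≤ M * ‖x - y‖ ^ θ := fun x y =>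
      calc _ = ‖(g x - g y) (EuclideanSpace.single i 1)‖ := rfl
        _ ≤ ‖g x - g y‖ := by simpa using (g x - g y).le_opNorm (EuclideanSpace.single i 1)
        _ ≤ _ := hg x y
    calc ‖(g x - g y) (EuclideanSpace.single i 1)‖
        ≤ holderSemi θ (fun x => g x (EuclideanSpace.single i 1)) * ‖x - y‖ ^ θ :=
          norm_sub_le_holderSemi_mul hgi x y
      _ ≤ H * ‖x - y‖ ^ θ := by
          gcongr
          exact le_ciSup (f := fun j => holderSemi θ fun x => g x (EuclideanSpace.single j 1))
            (Set.finite_range _).bddAbove i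
  calc ‖g x - g y‖ ≤ √(Fintype.card ι) * ⨆ i, ‖(g x - g y) (EuclideanSpace.single i 1)‖ :=
        opNorm_le_sqrt_card_mul_iSup_norm_apply_single _
    _ ≤ √(Fintype.card ι) * (H * ‖x - y‖ ^ θ) := by
        gcongr
        exact Real.iSup_le hpartial (by positivity)
    _ = √(Fintype.card ι) * H * ‖x - y‖ ^ θ := by ring

end Euclidean

section Interpolation

variable {E F : Type*} [NormedAddCommGroup E] [NormedSpace ℝ E] [NormedAddCommGroup F]
  [NormedSpace ℝ F] {f : E → F} {A L θ : ℝ}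

lemma norm_image_sub_sub_fderiv_le_of_holder (hf : Differentiable ℝ f) (hθ : 0 ≤ θ) (hL : 0 ≤ L)
    (hf' : ∀ x y, ‖fderiv ℝ f x - fderiv ℝ f y‖ ≤ L * ‖x - y‖ ^ θ) (x h : E) :
    ‖f (x + h) - f x - fderiv ℝ f x h‖ ≤ L * ‖h‖ ^ θ * ‖h‖ := by
  have hbound : ∀ z ∈ closedBall x ‖h‖, ‖fderiv ℝ f z - fderiv ℝ f x‖ ≤ L * ‖h‖ ^ θ :=
    fun z hz => (hf' z x).trans (by gcongr; exact mem_closedBall_iff_norm.mp hz)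
  have hmem : x + h ∈ closedBall x ‖h‖ := mem_closedBall_iff_norm.mpr (by rw [add_sub_cancel_left])
  simpa only [add_sub_cancel_left] using
    (convex_closedBall x ‖h‖).norm_image_sub_le_of_norm_fderiv_le' (fun z _ => hf z) hbound
      (mem_closedBall_self (norm_nonneg h)) hmem

lemma supNorm_fderiv_le_of_holder (hf : Differentiable ℝ f) (hA : ∀ x, ‖f x‖ ≤ A) (hθ : 0 ≤ θ)
    (hL : 0 ≤ L) (hf' : ∀ x y, ‖fderiv ℝ f x - fderiv ℝ f y‖ ≤ L * ‖x - y‖ ^ θ)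
    {t : ℝ} (ht : 0 < t) :
    supNorm (fun x => fderiv ℝ f x) ≤ 2 * A / t + L * t ^ θ := by
  refine supNorm_le fun x => ?_
  have hA0 : 0 ≤ A := (norm_nonneg _).trans (hA x)
  refine ContinuousLinearMap.opNorm_le_of_unit_norm (by positivity) fun v hv => ?_
  have hr := norm_image_sub_sub_fderiv_le_of_holder hf hθ hL hf' x (t • v)
  rw [norm_smul, hv, Real.norm_of_nonneg ht.le, mul_one] at hr
  have hscaled : t * ‖fderiv ℝ f x v‖ ≤ 2 * A + L * t ^ θ * t :=
    calc t * ‖fderiv ℝ f x v‖ = ‖fderiv ℝ f x (t • v)‖ := by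
          rw [map_smul, norm_smul, Real.norm_of_nonneg ht.le]
      _ = ‖f (x + t • v) - f x - (f (x + t • v) - f x - fderiv ℝ f x (t • v))‖ := by
          rw [sub_sub_cancel]
      _ ≤ ‖f (x + t • v)‖ + ‖f x‖ + ‖f (x + t • v) - f x - fderiv ℝ f x (t • v)‖ :=
          (norm_sub_le _ _).trans (by gcongr; exact norm_sub_le _ _)
      _ ≤ 2 * A + L * t ^ θ * t := by linarith [hA (x + t • v), hA x]
  have hrhs : t * (2 * A / t + L * t ^ θ) = 2 * A + L * t ^ θ * t := by
    field_simp
  exact le_of_mul_le_mul_left (hscaled.trans hrhs.ge) ht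

end Interpolation

section Optimization

variable {A K θ : ℝ}

lemma self_le_rpow_mul_rpow (hA : 0 ≤ A) (hAK : A ≤ K) (hθ : -1 < θ) :
    A ≤ A ^ (θ / (1 + θ)) * K ^ (1 / (1 + θ)) := by
  have h1θ : 0 < 1 + θ := by linarith
  have hsum : θ / (1 + θ) + 1 / (1 + θ) = 1 := by
    rw [← add_div, add_comm, div_self h1θ.ne']
  calc A = A ^ (θ / (1 + θ)) * A ^ (1 / (1 + θ)) := by
        rw [← Real.rpow_add' hA (by rw [hsum]; exact one_ne_zero), hsum, Real.rpow_one]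
    _ ≤ A ^ (θ / (1 + θ)) * K ^ (1 / (1 + θ)) :=
        mul_le_mul_of_nonneg_left (Real.rpow_le_rpow hA hAK (one_div_pos.mpr h1θ).le)
          (Real.rpow_nonneg hA _)

lemma le_rpow_mul_rpow_of_forall_le (hA : 0 < A) (hK : 0 < K) (hθ : -1 < θ) {a b B : ℝ}
    (h : ∀ t > 0, B ≤ a * A / t + b * K * t ^ θ) :
    B ≤ (a + b) * (A ^ (θ / (1 + θ)) * K ^ (1 / (1 + θ))) := by
  have h1θ : 1 + θ ≠ 0 := by linarith
  have hq : θ / (1 + θ) = 1 - 1 / (1 + θ) := by field_simp; ring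
  have hp : 1 / (1 + θ) = 1 - θ / (1 + θ) := by rw [hq]; ring
  have hpq : 1 / (1 + θ) * θ = θ / (1 + θ) := by ring
  have hdiv : A / (A / K) ^ (1 / (1 + θ)) = A ^ (θ / (1 + θ)) * K ^ (1 / (1 + θ)) := by
    rw [Real.div_rpow hA.le hK.le, hq, Real.rpow_sub hA, Real.rpow_one]
    field_simp
  have hmul : K * ((A / K) ^ (1 / (1 + θ))) ^ θ = A ^ (θ / (1 + θ)) * K ^ (1 / (1 + θ)) := by
    rw [← Real.rpow_mul (div_pos hA hK).le, hpq, Real.div_rpow hA.le hK.le, hp,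
      Real.rpow_sub hK, Real.rpow_one]
    ring
  calc B ≤ a * A / (A / K) ^ (1 / (1 + θ)) + b * K * ((A / K) ^ (1 / (1 + θ))) ^ θ :=
        h _ (by positivity)
    _ = (a + b) * (A ^ (θ / (1 + θ)) * K ^ (1 / (1 + θ))) := by
        rw [mul_div_assoc, mul_assoc b, hdiv, hmul]
        ring

end Optimization

/-- For every θ ∈ (0,1) there exists c > 0 such that every f : ℝⁿ → ℝ of class
C^{1,θ} (bounded, with bounded derivative, whose derivative is θ-Hölder) satisfies
‖f‖_{C¹} ≤ c ‖f‖_{C⁰}^{θ/(1+θ)} ‖f‖_{C^{1,θ}}^{1/(1+θ)}, where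
‖f‖_{C^{1,θ}} = ‖f‖_{C¹} + max_{|α|=1} [∂^α f]_θ. -/
theorem holder_interpolation_one (n : ℕ) (θ : ℝ) (hθ : θ ∈ Set.Ioo (0:ℝ) 1) :
    ∃ c : ℝ, 0 < c ∧ ∀ f : EuclideanSpace ℝ (Fin n) → ℝ,
      ContDiff ℝ 1 f →
      (∃ M : ℝ, ∀ x, |f x| ≤ M) →
      (∃ M : ℝ, ∀ x, ‖fderiv ℝ f x‖ ≤ M) →
      (∃ M : ℝ, ∀ x y, ‖fderiv ℝ f x - fderiv ℝ f y‖ ≤ M * ‖x - y‖ ^ θ) →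
      supNorm f + supNorm (fun x => fderiv ℝ f x) ≤
        c * supNorm f ^ (θ / (1 + θ)) *
          ((supNorm f + supNorm (fun x => fderiv ℝ f x)) +
            ⨆ i : Fin n,
              holderSemi θ (fun x => fderiv ℝ f x (EuclideanSpace.single i 1))) ^
            (1 / (1 + θ)) := by
  obtain ⟨hθ₀, -⟩ := hθ
  have hq : 0 < θ / (1 + θ) := div_pos hθ₀ (by linarith)
  refine ⟨3 + √n, by positivity, ?_⟩
  rintro f hf ⟨M₀, hM₀⟩ - ⟨M₂, hM₂⟩
  set A := supNorm f
  set B := supNorm fun x => fderiv ℝ f x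
  set H := ⨆ i : Fin n, holderSemi θ fun x => fderiv ℝ f x (EuclideanSpace.single i 1)
  have hA : ∀ x, ‖f x‖ ≤ A := norm_le_supNorm ⟨M₀, Set.forall_mem_range.mpr hM₀⟩
  have hA0 : 0 ≤ A := supNorm_nonneg f
  have hB0 : 0 ≤ B := supNorm_nonneg _
  have hH : 0 ≤ H := Real.iSup_nonneg fun i => holderSemi_nonneg θ _
  have hHol : ∀ x y, ‖fderiv ℝ f x - fderiv ℝ f y‖ ≤ √n * H * ‖x - y‖ ^ θ := by
    simpa using norm_sub_le_sqrt_card_mul_iSup_holderSemi_mul hM₂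
  have hBt : ∀ t > 0, B ≤ 2 * A / t + √n * (A + B + H) * t ^ θ := fun t ht =>
    (supNorm_fderiv_le_of_holder (hf.differentiable one_ne_zero) hA hθ₀.le
      (mul_nonneg (Real.sqrt_nonneg _) hH) hHol ht).trans (by gcongr; linarith)
  rcases hA0.eq_or_lt with hA0 | hA0
  · have hf0 : f = 0 := funext fun x => norm_le_zero_iff.mp (hA0 ▸ hA x)
    have hB : B = 0 := by simp [B, hf0, supNorm]
    rw [← hA0, hB, Real.zero_rpow hq.ne', mul_zero, zero_mul, add_zero]
  · calc A + B ≤ A ^ (θ / (1 + θ)) * (A + B + H) ^ (1 / (1 + θ))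
          + (2 + √n) * (A ^ (θ / (1 + θ)) * (A + B + H) ^ (1 / (1 + θ))) :=
          add_le_add (self_le_rpow_mul_rpow hA0.le (by linarith) (by linarith))
            (le_rpow_mul_rpow_of_forall_le hA0 (by linarith) (by linarith) hBt)
      _ = _ := by ring
end

section
/- For every t ∈ ℕ there is a constant c_t > 0 such that every f ∈ C^{t+1}(ℝⁿ) with all derivatives up to order t+1 bounded satisfies ‖f‖_{C^t} ≤ c_t · ‖f‖_{C⁰}^{1/(t+1)} · ‖f‖_{C^{t+1}}^{t/(t+1)}, where ‖f‖_{C^k} := max_{|α| ≤ k} ‖∂^α f‖_∞. -/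
/-- The partial derivative in the `i`-th coordinate direction. -/
noncomputable def pd {n : ℕ} {F : Type*} [NormedAddCommGroup F] [NormedSpace ℝ F]
    (i : Fin n) (f : EuclideanSpace ℝ (Fin n) → F) : EuclideanSpace ℝ (Fin n) → F :=
  fun x => fderiv ℝ f x (EuclideanSpace.single i 1)

/-- The iterated partial derivative `∂^α` for a multi-index `α : Fin n → ℕ`. -/
noncomputable def mderiv {n : ℕ} {F : Type*} [NormedAddCommGroup F] [NormedSpace ℝ F]
    (α : Fin n → ℕ) (f : EuclideanSpace ℝ (Fin n) → F) : EuclideanSpace ℝ (Fin n) → F :=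
  (List.finRange n).foldr (fun i g => (pd i)^[α i] g) f

/-- The C^k norm `‖f‖_{C^k} = max_{|α| ≤ k} ‖∂^α f‖_∞`. -/
noncomputable def CkNorm {n : ℕ} (k : ℕ) (f : EuclideanSpace ℝ (Fin n) → ℝ) : ℝ :=
  ⨆ α : {α : Fin n → ℕ // ∑ i, α i ≤ k}, ⨆ x, ‖mderiv α.1 f x‖

/-!
Landau's inequality `sup |g'|² ≤ 4 sup |g| sup |g''|`, applied along coordinate lines, gives
`a (k+1)² ≤ 4 a k a (k+2)` for `a k = ‖f‖_{C^k}`: a derivative `∂^α` of order `k + 1` is `∂ᵢ ∂^β`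
with `|β| = k` and `∂ᵢ ∂ᵢ ∂^β` of order `k + 2`. Choosing `i` as the first coordinate with
`α i ≠ 0` makes `∂ᵢ` the outermost derivative in `mderiv`, so no symmetry of mixed partials is
needed. Such an almost log-convex sequence satisfies
`a t ^ (t+1) ≤ 2 ^ (t(t+1)) a 0 a (t+1) ^ t`, which is the claim with `c = 2 ^ t`.
-/

open Set

section Landau

theorem abs_sub_sub_mul_deriv_le {g g' g'' : ℝ → ℝ} {B : ℝ}
    (hg : ∀ s, HasDerivAt g (g' s) s) (hg' : ∀ s, HasDerivAt g' (g'' s) s)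
    (hB : ∀ s, |g'' s| ≤ B) (x : ℝ) {h : ℝ} (hh : 0 ≤ h) :
    |g (x + h) - g x - h * g' x| ≤ B * h ^ 2 / 2 := by
  have hlip : ∀ s ∈ Icc x (x + h), ‖g' s - g' x‖ ≤ B * (s - x) :=
    norm_image_sub_le_of_norm_deriv_le_segment' (fun s _ => (hg' s).hasDerivWithinAt)
      (fun s _ => hB s)
  have hrem : ∀ s, HasDerivAt (fun s => g s - g x - (s - x) * g' x) (g' s - g' x) s := fun s =>
    (((hg s).sub_const (g x)).sub
      (((hasDerivAt_id' s).sub_const x).mul_const (g' x))).congr_deriv (by ring)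
  have hbound : ∀ s, HasDerivAt (fun s => B * (s - x) ^ 2 / 2) (B * (s - x)) s := fun s =>
    ((((hasDerivAt_id' s).sub_const x).pow 2).const_mul B |>.div_const 2).congr_deriv
      (by norm_num; ring)
  have := image_norm_le_of_norm_deriv_right_le_deriv_boundary
    (fun s _ => (hrem s).continuousAt.continuousWithinAt) (fun s _ => (hrem s).hasDerivWithinAt)
    (by simp) hbound (fun s hs => hlip s (Ico_subset_Icc_self hs))
    (right_mem_Icc.2 (le_add_of_nonneg_right hh))
  simpa using this

theorem sq_deriv_le_of_abs_le {g g' g'' : ℝ → ℝ} {A B : ℝ}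
    (hg : ∀ s, HasDerivAt g (g' s) s) (hg' : ∀ s, HasDerivAt g' (g'' s) s)
    (hA : ∀ s, |g s| ≤ A) (hB : ∀ s, |g'' s| ≤ B) (x : ℝ) :
    g' x ^ 2 ≤ 4 * (A * B) := by
  have hA0 : 0 ≤ A := (abs_nonneg _).trans (hA x)
  have hB0 : 0 ≤ B := (abs_nonneg _).trans (hB x)
  have hlin : ∀ h, 0 ≤ h → h * |g' x| ≤ 2 * A + B * h ^ 2 / 2 := fun h hh => by
    have htaylor := abs_sub_sub_mul_deriv_le hg hg' hB x hh
    calc h * |g' x| = |h * g' x| := by rw [abs_mul, abs_of_nonneg hh]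
      _ = |(g (x + h) - g x) - (g (x + h) - g x - h * g' x)| := by ring_nf
      _ ≤ |g (x + h)| + |g x| + |g (x + h) - g x - h * g' x| := by
          grw [abs_sub, abs_sub (g (x + h))]
      _ ≤ 2 * A + B * h ^ 2 / 2 := by linarith [hA (x + h), hA x]
  -- the quadratic `B/2 h² - |g' x| h + 2A` is nonnegative for every real `h`
  have hdisc := discrim_le_zero (a := B / 2) (b := -|g' x|) (c := 2 * A) fun h => by
    rcases le_or_gt 0 h with hh | hh
    · nlinarith [hlin h hh]
    · nlinarith [abs_nonneg (g' x)]
  rw [discrim, neg_sq, sq_abs] at hdisc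
  linarith

variable {n : ℕ}

theorem sq_pd_le {F : EuclideanSpace ℝ (Fin n) → ℝ} {i : Fin n} {A B : ℝ}
    (hF : ContDiff ℝ 2 F) (hA : ∀ x, ‖F x‖ ≤ A) (hB : ∀ x, ‖pd i (pd i F) x‖ ≤ B)
    (x : EuclideanSpace ℝ (Fin n)) : pd i F x ^ 2 ≤ 4 * (A * B) := by
  set ℓ : ℝ → EuclideanSpace ℝ (Fin n) := fun s => x + s • EuclideanSpace.single i 1
  have hℓ : ∀ s, HasDerivAt ℓ (EuclideanSpace.single i 1) s := fun s =>
    (((hasDerivAt_id' s).smul_const _).const_add x).congr_deriv (one_smul ℝ _)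
  have hpd : ContDiff ℝ 1 (pd i F) :=
    (hF.fderiv_right (m := 1) (by norm_num)).clm_apply contDiff_const
  have hg : ∀ s, HasDerivAt (F ∘ ℓ) (pd i F (ℓ s)) s := fun s =>
    ((hF.differentiable (by norm_num)) (ℓ s)).hasFDerivAt.comp_hasDerivAt s (hℓ s)
  have hg' : ∀ s, HasDerivAt (pd i F ∘ ℓ) (pd i (pd i F) (ℓ s)) s := fun s =>
    ((hpd.differentiable (by norm_num)) (ℓ s)).hasFDerivAt.comp_hasDerivAt s (hℓ s)
  simpa [ℓ] using sq_deriv_le_of_abs_le hg hg' (fun s => hA (ℓ s)) (fun s => hB (ℓ s)) 0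

end Landau

section MultiIndex

variable {n : ℕ} {F : Type*} [NormedAddCommGroup F] [NormedSpace ℝ F]

theorem contDiff_pd {f : EuclideanSpace ℝ (Fin n) → F} {k : ℕ} (hf : ContDiff ℝ (k + 1) f)
    (i : Fin n) : ContDiff ℝ k (pd i f) :=
  (contDiff_succ_iff_fderiv.1 hf).2.2.clm_apply contDiff_const

theorem contDiff_iterate_pd {f : EuclideanSpace ℝ (Fin n) → F} {m k : ℕ} (hf : ContDiff ℝ m f)
    (i : Fin n) {r : ℕ} (h : k + r ≤ m) : ContDiff ℝ k ((pd i)^[r] f) := by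
  induction r generalizing k with
  | zero => exact hf.of_le (by exact_mod_cast h)
  | succ r ih =>
    rw [Function.iterate_succ_apply']
    exact_mod_cast contDiff_pd (ih (k := k + 1) (by omega)) i

theorem contDiff_mderiv {f : EuclideanSpace ℝ (Fin n) → F} {m k : ℕ} (hf : ContDiff ℝ m f)
    {α : Fin n → ℕ} (h : k + ∑ i, α i ≤ m) : ContDiff ℝ k (mderiv α f) := by
  rw [Fin.sum_univ_def] at h
  unfold mderiv
  generalize List.finRange n = l at h ⊢
  induction l generalizing k with
  | nil => exact hf.of_le (by simpa using h)
  | cons j l ih =>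
    simp only [List.map_cons, List.sum_cons] at h
    exact contDiff_iterate_pd (ih (k := k + α j) (by omega)) j le_rfl

@[simp]
theorem mderiv_zero (f : EuclideanSpace ℝ (Fin n) → F) : mderiv 0 f = f := by
  simp [mderiv]

theorem foldr_iterate_pd_add_single {f : EuclideanSpace ℝ (Fin n) → F} {α : Fin n → ℕ}
    {i : Fin n} (r : ℕ) {l : List (Fin n)} (hl : l.Pairwise (· < ·)) (hi : i ∈ l)
    (hα : ∀ j ∈ l, j < i → α j = 0) :
    l.foldr (fun j g => (pd j)^[(α + Pi.single i r : Fin n → ℕ) j] g) f =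
      (pd i)^[r] (l.foldr (fun j g => (pd j)^[α j] g) f) := by
  induction l with
  | nil => simp at hi
  | cons j l ih =>
    obtain ⟨hj, hl⟩ := List.pairwise_cons.1 hl
    rcases List.mem_cons.1 hi with rfl | hi
    · have htail : ∀ j' ∈ l, ∀ g : EuclideanSpace ℝ (Fin n) → F,
          (pd j')^[(α + Pi.single i r : Fin n → ℕ) j'] g = (pd j')^[α j'] g := fun j' hj' g => by
        rw [Pi.add_apply, Pi.single_eq_of_ne (hj j' hj').ne', add_zero]
      rw [List.foldr_cons, List.foldr_cons, List.foldr_ext _ _ _ htail, Pi.add_apply,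
        Pi.single_eq_same, add_comm, Function.iterate_add_apply]
    · have hji : j < i := hj i hi
      have hj0 : α j = 0 := hα j List.mem_cons_self hji
      rw [List.foldr_cons, List.foldr_cons, Pi.add_apply, Pi.single_eq_of_ne hji.ne, hj0,
        add_zero, Function.iterate_zero_apply]
      exact ih hl hi fun j' hj' => hα j' (List.mem_cons_of_mem _ hj')

theorem mderiv_add_single {f : EuclideanSpace ℝ (Fin n) → F} {α : Fin n → ℕ} {i : Fin n}
    (hα : ∀ j < i, α j = 0) (r : ℕ) :
    mderiv (α + Pi.single i r) f = (pd i)^[r] (mderiv α f) :=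
  foldr_iterate_pd_add_single r (List.pairwise_lt_finRange n) (List.mem_finRange i)
    fun j _ => hα j

end MultiIndex

theorem exists_eq_add_single_one {n : ℕ} {α : Fin n → ℕ} (hα : α ≠ 0) :
    ∃ i, ∃ β : Fin n → ℕ, α = β + Pi.single i 1 ∧ ∀ j < i, β j = 0 := by
  obtain ⟨j, hj⟩ := Function.ne_iff.1 hα
  obtain ⟨i, hi, hmin⟩ := Finset.exists_min_image (Finset.univ.filter (α · ≠ 0)) id
    ⟨j, by simpa using hj⟩
  have hlow : ∀ j < i, α j = 0 := fun j hj => by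
    by_contra h
    exact hj.not_ge (hmin j (by simpa using h))
  refine ⟨i, α - Pi.single i 1, funext fun j => ?_, fun j hj => ?_⟩
  · have : α i ≠ 0 := by simpa using hi
    by_cases hji : j = i
    · subst hji; simp; omega
    · simp [hji]
  · simp [hlow j hj]

theorem sum_add_single {n : ℕ} (β : Fin n → ℕ) (i : Fin n) (r : ℕ) :
    ∑ j, (β + Pi.single i r : Fin n → ℕ) j = ∑ j, β j + r := by
  simp [Finset.sum_add_distrib]

section CkNorm

variable {n : ℕ}

instance (k : ℕ) : Finite {α : Fin n → ℕ // ∑ i, α i ≤ k} :=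
  Set.Finite.to_subtype <| (Set.finite_Iic fun _ => k).subset fun _ hα i =>
    (Finset.single_le_sum (fun _ _ => Nat.zero_le _) (Finset.mem_univ i)).trans hα

instance (k : ℕ) : Nonempty {α : Fin n → ℕ // ∑ i, α i ≤ k} := ⟨⟨0, by simp⟩⟩

theorem CkNorm_nonneg (k : ℕ) {f : EuclideanSpace ℝ (Fin n) → ℝ} : 0 ≤ CkNorm k f :=
  Real.iSup_nonneg fun _ => Real.iSup_nonneg fun _ => norm_nonneg _

theorem CkNorm_le {k : ℕ} {f : EuclideanSpace ℝ (Fin n) → ℝ} {M : ℝ}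
    (h : ∀ α : Fin n → ℕ, ∑ i, α i ≤ k → ∀ x, ‖mderiv α f x‖ ≤ M) : CkNorm k f ≤ M :=
  ciSup_le fun α => ciSup_le (h α.1 α.2)

theorem norm_mderiv_le_CkNorm {k : ℕ} {f : EuclideanSpace ℝ (Fin n) → ℝ} {α : Fin n → ℕ}
    (hα : ∑ i, α i ≤ k) (hbdd : ∃ M, ∀ x, ‖mderiv α f x‖ ≤ M) (x : EuclideanSpace ℝ (Fin n)) :
    ‖mderiv α f x‖ ≤ CkNorm k f := by
  obtain ⟨M, hM⟩ := hbdd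
  calc ‖mderiv α f x‖ ≤ ⨆ x, ‖mderiv α f x‖ := le_ciSup ⟨M, forall_mem_range.2 hM⟩ x
    _ ≤ CkNorm k f :=
      le_ciSup (f := fun β : {α : Fin n → ℕ // ∑ i, α i ≤ k} => ⨆ x, ‖mderiv β.1 f x‖)
        (Set.finite_range _).bddAbove ⟨α, hα⟩

theorem CkNorm_succ_sq_le {k : ℕ} {f : EuclideanSpace ℝ (Fin n) → ℝ} (hf : ContDiff ℝ (k + 2) f)
    (hb : ∀ α : Fin n → ℕ, ∑ i, α i ≤ k + 2 → ∃ M : ℝ, ∀ x, ‖mderiv α f x‖ ≤ M) :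
    CkNorm (k + 1) f ^ 2 ≤ 4 * (CkNorm k f * CkNorm (k + 2) f) := by
  have hprod : 0 ≤ 4 * (CkNorm k f * CkNorm (k + 2) f) := by
    have := CkNorm_nonneg k (f := f); have := CkNorm_nonneg (k + 2) (f := f); positivity
  refine (Real.le_sqrt (CkNorm_nonneg _) hprod).1 (CkNorm_le fun α hα x => ?_)
  rw [Real.le_sqrt (norm_nonneg _) hprod]
  rcases eq_or_ne α 0 with rfl | hα0
  · have h0 := norm_mderiv_le_CkNorm (k := k) (by simp) (hb 0 (by simp)) x
    have h2 := norm_mderiv_le_CkNorm (k := k + 2) (by simp) (hb 0 (by simp)) x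
    rw [mderiv_zero] at h0 h2 ⊢
    nlinarith [norm_nonneg (f x)]
  · obtain ⟨i, β, rfl, hβ⟩ := exists_eq_add_single_one hα0
    rw [sum_add_single] at hα
    have hγ := sum_add_single β i (1 + 1)
    rw [mderiv_add_single hβ, Function.iterate_one, Real.norm_eq_abs, sq_abs]
    have hsmooth : ContDiff ℝ 2 (mderiv β f) :=
      contDiff_mderiv (m := k + 2) (k := 2) (by exact_mod_cast hf) (by omega)
    refine sq_pd_le hsmooth (norm_mderiv_le_CkNorm (by omega) (hb β (by omega))) (fun y => ?_) x
    rw [← Function.iterate_one (pd i), ← Function.iterate_add_apply, ← mderiv_add_single hβ]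
    exact norm_mderiv_le_CkNorm (by omega) (hb _ (by omega)) y

end CkNorm

theorem pow_succ_le_of_sq_le_mul {a : ℕ → ℝ} {c : ℝ} {m : ℕ} (ha : ∀ k, 0 ≤ a k) (hc : 0 ≤ c)
    (h : ∀ k, k + 2 ≤ m → a (k + 1) ^ 2 ≤ c ^ 2 * (a k * a (k + 2))) :
    ∀ k, k + 1 ≤ m → a k ^ (k + 1) ≤ c ^ (k * (k + 1)) * a 0 * a (k + 1) ^ k := by
  intro k hk
  induction k with
  | zero => simp
  | succ k ih =>
    have hprev := ih (by omega)
    rcases (ha (k + 1)).eq_or_lt with h0 | hpos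
    · rw [← h0, zero_pow (by omega)]
      have := ha 0; have := ha (k + 2); positivity
    refine le_of_mul_le_mul_left ?_ (pow_pos hpos k)
    have := ha (k + 2)
    calc a (k + 1) ^ k * a (k + 1) ^ (k + 1 + 1) = (a (k + 1) ^ 2) ^ (k + 1) := by ring
      _ ≤ (c ^ 2 * (a k * a (k + 2))) ^ (k + 1) := pow_le_pow_left₀ (sq_nonneg _) (h k hk) _
      _ = c ^ (2 * (k + 1)) * a k ^ (k + 1) * a (k + 2) ^ (k + 1) := by ring
      _ ≤ c ^ (2 * (k + 1)) * (c ^ (k * (k + 1)) * a 0 * a (k + 1) ^ k) * a (k + 2) ^ (k + 1) := by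
          gcongr
      _ = a (k + 1) ^ k * (c ^ ((k + 1) * (k + 1 + 1)) * a 0 * a (k + 1 + 1) ^ (k + 1)) := by
          ring

theorem le_mul_rpow_mul_rpow_of_pow_succ_le {x y z c : ℝ} {t : ℕ} (hx : 0 ≤ x) (hy : 0 ≤ y)
    (hz : 0 ≤ z) (hc : 0 ≤ c) (h : x ^ (t + 1) ≤ c ^ (t * (t + 1)) * y * z ^ t) :
    x ≤ c ^ t * y ^ ((1 : ℝ) / (t + 1)) * z ^ ((t : ℝ) / (t + 1)) := by
  rw [← pow_le_pow_iff_left₀ hx (by positivity) t.succ_ne_zero]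
  refine h.trans_eq ?_
  have ht : (t : ℝ) + 1 ≠ 0 := by positivity
  rw [mul_pow, mul_pow, ← pow_mul, ← Real.rpow_mul_natCast hy, ← Real.rpow_mul_natCast hz]
  push_cast
  rw [div_mul_cancel₀ _ ht, div_mul_cancel₀ _ ht, Real.rpow_one, Real.rpow_natCast]

/-- For every t ∈ ℕ there is c_t > 0 such that every f ∈ C^{t+1}(ℝⁿ) with all
derivatives up to order t+1 bounded satisfies
‖f‖_{C^t} ≤ c_t ‖f‖_{C⁰}^{1/(t+1)} ‖f‖_{C^{t+1}}^{t/(t+1)}. -/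
theorem Ck_interpolation (n : ℕ) (t : ℕ) :
    ∃ c : ℝ, 0 < c ∧ ∀ f : EuclideanSpace ℝ (Fin n) → ℝ,
      ContDiff ℝ (t + 1) f →
      (∀ α : Fin n → ℕ, ∑ i, α i ≤ t + 1 → ∃ M : ℝ, ∀ x, ‖mderiv α f x‖ ≤ M) →
      CkNorm t f ≤
        c * CkNorm 0 f ^ ((1:ℝ) / (t + 1)) * CkNorm (t + 1) f ^ ((t:ℝ) / (t + 1)) := by
  refine ⟨2 ^ t, by positivity, fun f hf hb => ?_⟩
  have hstep : ∀ k, k + 2 ≤ t + 1 →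
      CkNorm (k + 1) f ^ 2 ≤ 2 ^ 2 * (CkNorm k f * CkNorm (k + 2) f) := fun k hk => by
    rw [show (2 : ℝ) ^ 2 = 4 by norm_num]
    exact CkNorm_succ_sq_le (hf.of_le (by exact_mod_cast hk)) fun α hα => hb α (by omega)
  exact le_mul_rpow_mul_rpow_of_pow_succ_le (CkNorm_nonneg t) (CkNorm_nonneg 0)
    (CkNorm_nonneg _) zero_le_two
    (pow_succ_le_of_sq_le_mul (fun k => CkNorm_nonneg k) zero_le_two hstep t le_rfl)
end
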